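/- arXiv:2112.10503 — 4 statements merged into one kernel-verified Lean document; each statement's English description precedes it below -/
import Mathlib

section
/- Fix c ∈ (−2, −1) and A > 4. There exists α₀ > 0 such that for every α > α₀ there is a unique u* ∈ (−2, c) satisfying ∫₁^{R(f(u*) − A)} (3u² − 3)/(u − c) du + ∫_{−2}^{u*} (3 − 3u²)/(u − c) du = α. (The two integrals are the transit times along the right and left branches of the critical manifold in the ε = 0 kicked dynamics, so u* is the kick point of the unique α-periodic threshold-crossing trajectory of the singular (ε = 0) periodically kicked FHN cell.) -/
/-!
On either branch the slow equation `(3 - 3u²) u' = u - c` gives `dt = ±(3u² - 3)/(u - c) du`,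
with the single primitive `3u²/2 + 3cu + (3c² - 3) log (u - c)`; since `Real.log x = Real.log |x|`
it serves on both sides of `c`. The period of the orbit kicked at `w` is thus an explicit function
of `w`. It is strictly increasing on `[-2, c)`, because the landing point `R (f w - A)` climbs the
right branch as `w` climbs the left one; it is continuous, because the monotone `R` maps onto an
interval; and the logarithm makes it blow up as `w → c⁻`. Hence every `α` above the period of the
kick at `-2` is attained exactly once.
-/

open Set Filter Topology

theorem StrictMonoOn.existsUnique_eq_of_tendsto_atTop {X Y : Type*}
    [ConditionallyCompleteLinearOrder X] [TopologicalSpace X] [OrderTopology X] [DenselyOrdered X]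
    [LinearOrder Y] [TopologicalSpace Y] [OrderClosedTopology Y] {f : X → Y} {a b : X} {y : Y}
    (hf : StrictMonoOn f (Ico a b)) (hcont : ContinuousOn f (Ico a b)) (hab : a < b)
    (htop : Tendsto f (𝓝[<] b) atTop) (hy : f a < y) :
    ∃! x, x ∈ Ioo a b ∧ f x = y := by
  have := nhdsLT_neBot_of_exists_lt ⟨a, hab⟩
  obtain ⟨x₁, hyx₁, hx₁⟩ := ((htop.eventually_ge_atTop y).and (Ioo_mem_nhdsLT hab)).exists
  obtain ⟨x, hx, hfx⟩ := intermediate_value_Icc hx₁.1.le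
    (hcont.mono (Icc_subset_Ico_right hx₁.2)) ⟨hy.le, hyx₁⟩
  have hax : a < x := hx.1.lt_of_ne (by rintro rfl; exact hy.ne hfx)
  refine ⟨x, ⟨⟨hax, hx.2.trans_lt hx₁.2⟩, hfx⟩, fun x' ⟨hx', hfx'⟩ => ?_⟩
  exact hf.injOn (Ioo_subset_Ico_self hx') ⟨hax.le, hx.2.trans_lt hx₁.2⟩ (hfx'.trans hfx.symm)

lemma strictAntiOn_fhnCubic_Ici : StrictAntiOn (fun u : ℝ => 3 * u - u ^ 3) (Ici 1) := by
  intro a (ha : 1 ≤ a) b _ hab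
  have hq : 0 < a * a + a * b + b * b - 3 := by nlinarith
  nlinarith [mul_pos (sub_pos.2 hab) hq]

lemma strictAntiOn_fhnCubic_Iic : StrictAntiOn (fun u : ℝ => 3 * u - u ^ 3) (Iic (-1)) := by
  intro a _ b (hb : b ≤ -1) hab
  have hq : 0 < a * a + a * b + b * b - 3 := by nlinarith
  nlinarith [mul_pos (sub_pos.2 hab) hq]

lemma fhnCubic_lt_neg_two {r : ℝ} (hr : 2 < r) : 3 * r - r ^ 3 < -2 := by
  nlinarith [mul_pos (sub_pos.2 hr) (sq_pos_of_pos (by linarith : (0 : ℝ) < r + 1))]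

lemma fhnCubic_le_two {u : ℝ} (hu : -2 ≤ u) : 3 * u - u ^ 3 ≤ 2 := by
  nlinarith [mul_nonneg (sq_nonneg (u - 1)) (by linarith : (0 : ℝ) ≤ u + 2)]

def IsRightBranchRoot (R : ℝ → ℝ) : Prop :=
  ∀ v : ℝ, v < -2 → 2 < R v ∧ 3 * R v - (R v) ^ 3 = v

namespace IsRightBranchRoot

variable {R : ℝ → ℝ}

lemma apply_fhnCubic (hR : IsRightBranchRoot R) {r : ℝ} (hr : 2 < r) : R (3 * r - r ^ 3) = r := by
  obtain ⟨h2, hroot⟩ := hR _ (fhnCubic_lt_neg_two hr)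
  exact strictAntiOn_fhnCubic_Ici.injOn (mem_Ici.2 (by linarith)) (mem_Ici.2 (by linarith)) hroot

lemma strictAntiOn (hR : IsRightBranchRoot R) : StrictAntiOn R (Iio (-2)) := by
  intro v hv w hw hvw
  obtain ⟨hv2, hvroot⟩ := hR v hv
  obtain ⟨hw2, hwroot⟩ := hR w hw
  refine (strictAntiOn_fhnCubic_Ici.lt_iff_gt (mem_Ici.2 (by linarith))
    (mem_Ici.2 (by linarith))).1 ?_
  simpa only [hvroot, hwroot] using hvw

lemma continuousOn (hR : IsRightBranchRoot R) : ContinuousOn R (Iio (-2)) := by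
  intro v hv
  have hmono : StrictMonoOn (fun x => -R x) (Iio (-2)) :=
    fun x hx y hy hxy => neg_lt_neg (hR.strictAntiOn hx hy hxy)
  have himage : Iio (-2) ⊆ (fun x => -R x) '' Iio (-2) := fun x (hx : x < -2) =>
    ⟨3 * -x - (-x) ^ 3, fhnCubic_lt_neg_two (by linarith), by
      simp only [hR.apply_fhnCubic (show 2 < -x by linarith), neg_neg]⟩
  have hneg := hmono.continuousAt_of_image_mem_nhds (Iio_mem_nhds hv)
    (mem_of_superset (Iio_mem_nhds (by linarith [(hR v hv).1])) himage)
  refine ContinuousAt.continuousWithinAt ?_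
  convert hneg.neg using 1
  exact (neg_neg R).symm

end IsRightBranchRoot

noncomputable def fhnSlowTime (c u : ℝ) : ℝ :=
  3 / 2 * u ^ 2 + 3 * c * u + (3 * c ^ 2 - 3) * Real.log (u - c)

section SlowTime

variable {c : ℝ}

lemma hasDerivAt_fhnSlowTime {u : ℝ} (hu : u ≠ c) :
    HasDerivAt (fhnSlowTime c) ((3 * u ^ 2 - 3) / (u - c)) u := by
  have hlog := ((hasDerivAt_id' u).sub_const c).log (sub_ne_zero.2 hu)
  refine ((((hasDerivAt_pow 2 u).const_mul (3 / 2)).add ((hasDerivAt_id' u).const_mul (3 * c))).add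
    (hlog.const_mul (3 * c ^ 2 - 3))).congr_deriv ?_
  field_simp [sub_ne_zero.2 hu]
  ring

lemma integral_eq_fhnSlowTime_sub {a b : ℝ} (hc : c ∉ uIcc a b) :
    ∫ u in a..b, (3 * u ^ 2 - 3) / (u - c) = fhnSlowTime c b - fhnSlowTime c a := by
  have hne : ∀ u ∈ uIcc a b, u ≠ c := fun u hu => ne_of_mem_of_not_mem hu hc
  refine intervalIntegral.integral_eq_sub_of_hasDerivAt
    (fun u hu => hasDerivAt_fhnSlowTime (hne u hu)) (ContinuousOn.intervalIntegrable ?_)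
  exact ContinuousOn.div (by fun_prop) (by fun_prop) fun u hu => sub_ne_zero.2 (hne u hu)

lemma strictMonoOn_fhnSlowTime (hc : c < 1) : StrictMonoOn (fhnSlowTime c) (Ici 1) := by
  refine strictMonoOn_of_deriv_pos (convex_Ici 1)
    (fun u (hu : 1 ≤ u) => (hasDerivAt_fhnSlowTime (by linarith)).continuousAt.continuousWithinAt)
    fun u hu => ?_
  rw [interior_Ici, mem_Ioi] at hu
  rw [(hasDerivAt_fhnSlowTime (by linarith)).deriv]
  exact div_pos (by nlinarith) (by linarith)

lemma strictAntiOn_fhnSlowTime (hc : c ≤ -1) : StrictAntiOn (fhnSlowTime c) (Iio c) := by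
  refine strictAntiOn_of_deriv_neg (convex_Iio c)
    (fun u (hu : u < c) => (hasDerivAt_fhnSlowTime hu.ne).continuousAt.continuousWithinAt)
    fun u hu => ?_
  rw [interior_Iio, mem_Iio] at hu
  rw [(hasDerivAt_fhnSlowTime hu.ne).deriv]
  exact div_neg_of_pos_of_neg (by nlinarith) (by linarith)

lemma tendsto_fhnSlowTime_nhdsNE (hc : 1 < c ^ 2) : Tendsto (fhnSlowTime c) (𝓝[≠] c) atBot := by
  have hsub : Tendsto (fun u => u - c) (𝓝[≠] c) (𝓝[≠] 0) := by
    refine tendsto_nhdsWithin_iff.2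
      ⟨?_, eventually_nhdsWithin_of_forall fun u hu => sub_ne_zero.2 hu⟩
    simpa using ((continuous_sub_right c).tendsto c).mono_left nhdsWithin_le_nhds
  have hpoly : Tendsto (fun u : ℝ => 3 / 2 * u ^ 2 + 3 * c * u) (𝓝[≠] c)
      (𝓝 (3 / 2 * c ^ 2 + 3 * c * c)) :=
    (Continuous.tendsto (by fun_prop) c).mono_left nhdsWithin_le_nhds
  exact hpoly.add_atBot ((Real.tendsto_log_nhdsNE_zero.comp hsub).const_mul_atBot (by linarith))

end SlowTime

lemma fhnKick_lt_neg_two {A w : ℝ} (hA : 4 < A) (hw : -2 ≤ w) : 3 * w - w ^ 3 - A < -2 := by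
  linarith [fhnCubic_le_two hw]

noncomputable def fhnKickPeriod (c A : ℝ) (R : ℝ → ℝ) (w : ℝ) : ℝ :=
  fhnSlowTime c (R (3 * w - w ^ 3 - A)) - fhnSlowTime c 1 + (fhnSlowTime c (-2) - fhnSlowTime c w)

section KickPeriod

variable {c A : ℝ} {R : ℝ → ℝ}

lemma integral_add_integral_eq_fhnKickPeriod (hc : c < 1) (hA : 4 < A)
    (hR : IsRightBranchRoot R) {w : ℝ} (hw : w ∈ Ico (-2) c) :
    (∫ u in (1 : ℝ)..(R (3 * w - w ^ 3 - A)), (3 * u ^ 2 - 3) / (u - c)) +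
      (∫ u in (-2 : ℝ)..w, (3 - 3 * u ^ 2) / (u - c)) = fhnKickPeriod c A R w := by
  have hR2 := (hR _ (fhnKick_lt_neg_two hA hw.1)).1
  have hflip : ∀ u : ℝ, (3 - 3 * u ^ 2) / (u - c) = -((3 * u ^ 2 - 3) / (u - c)) :=
    fun u => by ring
  simp_rw [hflip, intervalIntegral.integral_neg]
  rw [integral_eq_fhnSlowTime_sub, integral_eq_fhnSlowTime_sub, fhnKickPeriod]
  · ring
  · rw [uIcc_of_le hw.1]; exact fun h => hw.2.not_ge h.2
  · rw [uIcc_of_le (by linarith)]; exact fun h => by linarith [h.1]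

lemma fhnSlowTime_one_lt_landing (hc : c < 1) (hA : 4 < A) (hR : IsRightBranchRoot R) {w : ℝ}
    (hw : -2 ≤ w) : fhnSlowTime c 1 < fhnSlowTime c (R (3 * w - w ^ 3 - A)) := by
  have hR2 := (hR _ (fhnKick_lt_neg_two hA hw)).1
  exact strictMonoOn_fhnSlowTime hc (mem_Ici.2 le_rfl) (mem_Ici.2 (by linarith)) (by linarith)

lemma fhnKickPeriod_neg_two_pos (hc : c < 1) (hA : 4 < A) (hR : IsRightBranchRoot R) :
    0 < fhnKickPeriod c A R (-2) := by
  have := fhnSlowTime_one_lt_landing hc hA hR le_rfl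
  rw [fhnKickPeriod]
  linarith

lemma strictMonoOn_fhnKickPeriod (hc : c ≤ -1) (hA : 4 < A) (hR : IsRightBranchRoot R) :
    StrictMonoOn (fhnKickPeriod c A R) (Ico (-2) c) := by
  intro w₁ hw₁ w₂ hw₂ hw
  have hkick : 3 * w₂ - w₂ ^ 3 - A < 3 * w₁ - w₁ ^ 3 - A := by
    linarith [strictAntiOn_fhnCubic_Iic (mem_Iic.2 (by linarith [hw₁.2]))
      (mem_Iic.2 (by linarith [hw₂.2])) hw]
  have hR₁ := hR _ (fhnKick_lt_neg_two hA hw₁.1)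
  have hR₂ := hR _ (fhnKick_lt_neg_two hA hw₂.1)
  have hright := strictMonoOn_fhnSlowTime (by linarith : c < 1) (mem_Ici.2 (by linarith))
    (mem_Ici.2 (by linarith)) (hR.strictAntiOn (fhnKick_lt_neg_two hA hw₂.1)
      (fhnKick_lt_neg_two hA hw₁.1) hkick)
  have hleft := strictAntiOn_fhnSlowTime hc hw₁.2 hw₂.2 hw
  simp only [fhnKickPeriod]
  linarith

lemma continuousOn_fhnKickPeriod (hc : c < 2) (hA : 4 < A) (hR : IsRightBranchRoot R) :
    ContinuousOn (fhnKickPeriod c A R) (Ico (-2) c) := by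
  intro w hw
  have hkick := fhnKick_lt_neg_two hA hw.1
  have hright : ContinuousAt (fun w => fhnSlowTime c (R (3 * w - w ^ 3 - A))) w :=
    (hasDerivAt_fhnSlowTime (by linarith [(hR _ hkick).1])).continuousAt.comp
      ((hR.continuousOn.continuousAt (Iio_mem_nhds hkick)).comp
        (f := fun w => 3 * w - w ^ 3 - A) (by fun_prop))
  have hleft := (hasDerivAt_fhnSlowTime hw.2.ne).continuousAt
  exact ((hright.sub continuousAt_const).add (continuousAt_const.sub hleft)).continuousWithinAt

lemma tendsto_fhnKickPeriod_nhdsLT (hc : c ∈ Ioo (-2) (-1)) (hA : 4 < A)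
    (hR : IsRightBranchRoot R) : Tendsto (fhnKickPeriod c A R) (𝓝[<] c) atTop := by
  have hright : ∀ᶠ w in 𝓝[<] c, 0 ≤ fhnSlowTime c (R (3 * w - w ^ 3 - A)) - fhnSlowTime c 1 := by
    filter_upwards [Ico_mem_nhdsLT hc.1] with w hw
    exact sub_nonneg.2 (fhnSlowTime_one_lt_landing (by linarith [hc.2]) hA hR hw.1).le
  have hleft : Tendsto (fun w => fhnSlowTime c (-2) - fhnSlowTime c w) (𝓝[<] c) atTop := by
    have hbot := (tendsto_fhnSlowTime_nhdsNE (by nlinarith [hc.2] : 1 < c ^ 2)).mono_left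
      (nhdsLT_le_nhdsNE c)
    simpa only [sub_eq_add_neg, Function.comp_apply] using
      tendsto_atTop_add_const_left _ _ (tendsto_neg_atBot_atTop.comp hbot)
  exact tendsto_atTop_add_left_of_le' _ 0 hright hleft

end KickPeriod

/-- For `c ∈ (-2, -1)` and `A > 4`, for all sufficiently large `α` there is a
unique `u* ∈ (-2, c)` with
`∫₁^{R(f(u*) − A)} (3u² − 3)/(u − c) du + ∫₋₂^{u*} (3 − 3u²)/(u − c) du = α`,
where `R v` is the unique real root `u > 2` of `3u − u³ = v` for `v < -2`.  Thus `u*` is the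
kick point of the unique `α`-periodic threshold-crossing trajectory of the singular (`ε = 0`)
periodically kicked FHN cell. -/
theorem fhn_singular_periodic_kick_point_unique
    (c A : ℝ) (hc : c ∈ Set.Ioo (-2 : ℝ) (-1)) (hA : 4 < A)
    (R : ℝ → ℝ)
    (hR : ∀ v : ℝ, v < -2 → 2 < R v ∧ 3 * R v - (R v) ^ 3 = v) :
    ∃ α₀ > (0 : ℝ), ∀ α, α₀ < α →
      ∃! w : ℝ, w ∈ Set.Ioo (-2 : ℝ) c ∧
        (∫ u in (1 : ℝ)..(R (3 * w - w ^ 3 - A)), (3 * u ^ 2 - 3) / (u - c)) +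
          (∫ u in (-2 : ℝ)..w, (3 - 3 * u ^ 2) / (u - c)) = α := by
  have hc1 : c < 1 := hc.2.trans (by norm_num)
  have hperiod := fun w (hw : w ∈ Ioo (-2) c) =>
    integral_add_integral_eq_fhnKickPeriod hc1 hA hR (Ioo_subset_Ico_self hw)
  refine ⟨fhnKickPeriod c A R (-2), fhnKickPeriod_neg_two_pos hc1 hA hR, fun α hα => ?_⟩
  obtain ⟨w, ⟨hw, hwα⟩, huniq⟩ :=
    (strictMonoOn_fhnKickPeriod hc.2.le hA hR).existsUnique_eq_of_tendsto_atTop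
      (continuousOn_fhnKickPeriod (hc1.trans one_lt_two) hA hR) hc.1
      (tendsto_fhnKickPeriod_nhdsLT hc hA hR) hα
  refine ⟨w, ⟨hw, (hperiod w hw).trans hwα⟩, fun w' ⟨hw', hw'α⟩ => ?_⟩
  exact huniq w' ⟨hw', (hperiod w' hw').symm.trans hw'α⟩
end

section
/- Fix c ∈ (−2, −1) and A > 4. Let T_R(w) = ∫₁^{R(f(w) − A)} (3u² − 3)/(u − c) du for w ∈ (−2, c), and let L : [0, ∞) → [−2, c) be the solution of the left-branch slow flow (3 − 3L(s)²)·L'(s) = L(s) − c with L(0) = −2. Then there exists α₀ > 0 such that for every α > α₀ the return map P(w) := L(α − T_R(w)) is well defined on (−2, c), has a fixed point u* ∈ (−2, c), and is a strict (weak) contraction near u*: there exists δ > 0 such that |P(w₂) − P(w₁)| < |w₂ − w₁| for all distinct w₁, w₂ ∈ (u* − δ, u* + δ) ∩ (−2, c). In particular the α-periodic trajectory of the singular (ε = 0) periodically kicked FHN cell is locally stable. -/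
/-!
For `w ∈ [-2, c]` the kick lands the state on the right branch at `u = R(f w - A) ∈ (2, A + 2]`.
The cubic is steeper there than on `[-2, -1]`, so `w ↦ R(f w - A)` is `1`-Lipschitz, and the
transit time `T_R` is Lipschitz with constant `K = 3 (A + 2)²` and bounded by `3 (A + 2)³`.
On the left branch `L` increases to `c` with speed `(c - L) / (3 L² - 3)`, which tends to `0`;
hence `L` is `1 / (2K)`-Lipschitz on some `[s₀, ∞)`. For `α > 3 (A + 2)³ + s₀` the return map
`P = L(α - T_R)` is then a `1/2`-contraction of `[-2, c]` into `(-2, c)`.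
-/

open Set Function

theorem abs_integral_sub_integral_le {g : ℝ → ℝ} {a b K r₁ r₂ : ℝ}
    (hg : ContinuousOn g (Icc a b)) (hK : ∀ u ∈ Icc a b, |g u| ≤ K)
    (h₁ : r₁ ∈ Icc a b) (h₂ : r₂ ∈ Icc a b) :
    |(∫ u in a..r₂, g u) - ∫ u in a..r₁, g u| ≤ K * |r₂ - r₁| := by
  have hint : ∀ {r}, r ∈ Icc a b → IntervalIntegrable g MeasureTheory.volume a r := fun hr =>
    (hg.mono (uIcc_subset_Icc (left_mem_Icc.2 (h₁.1.trans h₁.2)) hr)).intervalIntegrable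
  rw [intervalIntegral.integral_interval_sub_left (hint h₂) (hint h₁)]
  exact intervalIntegral.norm_integral_le_of_norm_le_const (f := g) fun u hu =>
    hK u (uIcc_subset_Icc h₁ h₂ (uIoc_subset_uIcc hu))

theorem exists_mem_Ioo_isFixedPt_of_abs_sub_le {P : ℝ → ℝ} {a b q : ℝ} (hab : a ≤ b)
    (hP : ∀ x ∈ Icc a b, ∀ y ∈ Icc a b, |P y - P x| ≤ q * |y - x|)
    (hmaps : MapsTo P (Icc a b) (Ioo a b)) : ∃ x ∈ Ioo a b, IsFixedPt P x := by
  have hcont : ContinuousOn P (Icc a b) :=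
    (LipschitzOnWith.of_dist_le' fun x hx y hy => by
      simpa only [Real.dist_eq] using hP y hy x hx).continuousOn
  obtain ⟨x, hx, hfix⟩ :=
    exists_mem_Icc_isFixedPt_of_mapsTo hcont hab (hmaps.mono_right Ioo_subset_Icc_self)
  exact ⟨x, hfix ▸ hmaps hx, hfix⟩

namespace FHN

theorem cubic_mem_Icc {w : ℝ} (hw : w ∈ Icc (-2 : ℝ) 2) : 3 * w - w ^ 3 ∈ Icc (-2 : ℝ) 2 := by
  obtain ⟨hw₁, hw₂⟩ := hw
  constructor
  · nlinarith [mul_nonneg (sq_nonneg (w + 1)) (sub_nonneg.2 hw₂)]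
  · nlinarith [mul_nonneg (sq_nonneg (w - 1)) (neg_le_iff_add_nonneg.1 hw₁)]

theorem le_of_neg_le_cubic {r B : ℝ} (hr : 2 ≤ r) (h : -B ≤ 3 * r - r ^ 3) : r ≤ B := by
  nlinarith [mul_nonneg (mul_nonneg (sub_nonneg.2 hr) (by linarith : (0 : ℝ) ≤ r + 2))
    (by linarith : (0 : ℝ) ≤ r)]

/-- The cubic has slope `≤ -9` on `[2, ∞)` but slope in `[-9, 0]` on `[-2, -1]`. -/
theorem abs_sub_le_abs_sub_of_cubic_sub_eq {a b x y : ℝ} (ha : 2 ≤ a) (hb : 2 ≤ b)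
    (hx : x ∈ Icc (-2 : ℝ) (-1)) (hy : y ∈ Icc (-2 : ℝ) (-1))
    (h : 3 * a - a ^ 3 - (3 * b - b ^ 3) = 3 * x - x ^ 3 - (3 * y - y ^ 3)) :
    |a - b| ≤ |x - y| := by
  obtain ⟨hx₁, hx₂⟩ := hx
  obtain ⟨hy₁, hy₂⟩ := hy
  have hfactor : |a - b| * (a ^ 2 + a * b + b ^ 2 - 3) = |x - y| * (x ^ 2 + x * y + y ^ 2 - 3) := by
    have hab : 0 ≤ a ^ 2 + a * b + b ^ 2 - 3 := by nlinarith
    have hxy : 0 ≤ x ^ 2 + x * y + y ^ 2 - 3 := by nlinarith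
    rw [← abs_of_nonneg hab, ← abs_of_nonneg hxy, ← abs_mul, ← abs_mul]
    congr 1
    linear_combination -h
  have hsteep : 9 ≤ a ^ 2 + a * b + b ^ 2 - 3 := by nlinarith
  have hflat : x ^ 2 + x * y + y ^ 2 - 3 ≤ 9 := by nlinarith
  nlinarith [abs_nonneg (a - b), abs_nonneg (x - y)]

section KickedRoot

variable {R : ℝ → ℝ} {A : ℝ}

theorem kickedRoot_mem_Ioc (hR : ∀ v : ℝ, v < -2 → 2 < R v ∧ 3 * R v - R v ^ 3 = v)
    (hA : 4 < A) {w : ℝ} (hw : w ∈ Icc (-2 : ℝ) 2) :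
    R (3 * w - w ^ 3 - A) ∈ Ioc 2 (A + 2) := by
  obtain ⟨hf₁, hf₂⟩ := cubic_mem_Icc hw
  obtain ⟨hR₂, hRcubic⟩ := hR (3 * w - w ^ 3 - A) (by linarith)
  exact ⟨hR₂, le_of_neg_le_cubic hR₂.le (by rw [hRcubic]; linarith)⟩

theorem abs_kickedRoot_sub_le (hR : ∀ v : ℝ, v < -2 → 2 < R v ∧ 3 * R v - R v ^ 3 = v)
    (hA : 4 < A) {w₁ w₂ : ℝ} (hw₁ : w₁ ∈ Icc (-2 : ℝ) (-1)) (hw₂ : w₂ ∈ Icc (-2 : ℝ) (-1)) :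
    |R (3 * w₂ - w₂ ^ 3 - A) - R (3 * w₁ - w₁ ^ 3 - A)| ≤ |w₂ - w₁| := by
  have hroot : ∀ {w}, w ∈ Icc (-2 : ℝ) (-1) →
      2 ≤ R (3 * w - w ^ 3 - A) ∧ 3 * R (3 * w - w ^ 3 - A) - R (3 * w - w ^ 3 - A) ^ 3
        = 3 * w - w ^ 3 - A := by
    intro w hw
    have hw' : w ∈ Icc (-2 : ℝ) 2 := ⟨hw.1, by linarith [hw.2]⟩
    exact ⟨(kickedRoot_mem_Ioc hR hA hw').1.le, (hR _ (by linarith [(cubic_mem_Icc hw').2])).2⟩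
  obtain ⟨h₁, hc₁⟩ := hroot hw₁
  obtain ⟨h₂, hc₂⟩ := hroot hw₂
  exact abs_sub_le_abs_sub_of_cubic_sub_eq h₂ h₁ hw₂ hw₁ (by rw [hc₁, hc₂]; ring)

end KickedRoot

/-- `T_R(w)` is `transitTime c (R (3 * w - w ^ 3 - A))`. -/
noncomputable def transitTime (c r : ℝ) : ℝ :=
  ∫ u in (1 : ℝ)..r, (3 * u ^ 2 - 3) / (u - c)

section TransitTime

variable {c B : ℝ}

theorem abs_transitTime_integrand_le (hc : c ≤ 0) {u : ℝ} (hu : u ∈ Icc 1 B) :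
    |(3 * u ^ 2 - 3) / (u - c)| ≤ 3 * B ^ 2 := by
  obtain ⟨hu₁, hu₂⟩ := hu
  have hnum : 0 ≤ 3 * u ^ 2 - 3 := by nlinarith
  rw [abs_of_nonneg (div_nonneg hnum (by linarith))]
  calc (3 * u ^ 2 - 3) / (u - c) ≤ 3 * u ^ 2 - 3 := div_le_self hnum (by linarith)
    _ ≤ 3 * B ^ 2 := by nlinarith

theorem abs_transitTime_sub_le (hc : c ≤ 0) {r₁ r₂ : ℝ} (h₁ : r₁ ∈ Icc 1 B)
    (h₂ : r₂ ∈ Icc 1 B) : |transitTime c r₂ - transitTime c r₁| ≤ 3 * B ^ 2 * |r₂ - r₁| := by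
  refine abs_integral_sub_integral_le ?_ (fun u hu => abs_transitTime_integrand_le hc hu) h₁ h₂
  exact (continuousOn_const.mul (continuousOn_id.pow 2)).sub continuousOn_const |>.div
    (continuousOn_id.sub continuousOn_const) fun u hu => by linarith [hu.1]

theorem transitTime_le (hc : c ≤ 0) {r : ℝ} (hr : r ∈ Icc 1 B) : transitTime c r ≤ 3 * B ^ 3 := by
  have h := abs_transitTime_sub_le hc (left_mem_Icc.2 (hr.1.trans hr.2)) hr
  simp only [transitTime, intervalIntegral.integral_same, sub_zero] at h
  have hr₁ : |r - 1| ≤ B := by rw [abs_of_nonneg (by linarith [hr.1])]; linarith [hr.2]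
  calc transitTime c r ≤ 3 * B ^ 2 * |r - 1| := (le_abs_self _).trans h
    _ ≤ 3 * B ^ 2 * B := by gcongr
    _ = 3 * B ^ 3 := by ring

end TransitTime

theorem abs_transitTime_kickedRoot_sub_le {R : ℝ → ℝ} {A c : ℝ}
    (hR : ∀ v : ℝ, v < -2 → 2 < R v ∧ 3 * R v - R v ^ 3 = v) (hA : 4 < A) (hc : c ≤ 0)
    {w₁ w₂ : ℝ} (hw₁ : w₁ ∈ Icc (-2 : ℝ) (-1)) (hw₂ : w₂ ∈ Icc (-2 : ℝ) (-1)) :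
    |transitTime c (R (3 * w₂ - w₂ ^ 3 - A)) - transitTime c (R (3 * w₁ - w₁ ^ 3 - A))|
      ≤ 3 * (A + 2) ^ 2 * |w₂ - w₁| := by
  have hmem : ∀ {w}, w ∈ Icc (-2 : ℝ) (-1) → R (3 * w - w ^ 3 - A) ∈ Icc 1 (A + 2) := by
    intro w hw
    obtain ⟨h₁, h₂⟩ := kickedRoot_mem_Ioc hR hA ⟨hw.1, by linarith [hw.2]⟩
    exact ⟨by linarith, h₂⟩
  calc _ ≤ 3 * (A + 2) ^ 2 * |R (3 * w₂ - w₂ ^ 3 - A) - R (3 * w₁ - w₁ ^ 3 - A)| :=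
        abs_transitTime_sub_le hc (hmem hw₁) (hmem hw₂)
    _ ≤ 3 * (A + 2) ^ 2 * |w₂ - w₁| :=
        mul_le_mul_of_nonneg_left (abs_kickedRoot_sub_le hR hA hw₁ hw₂) (by positivity)

theorem transitTime_kickedRoot_le {R : ℝ → ℝ} {A c : ℝ}
    (hR : ∀ v : ℝ, v < -2 → 2 < R v ∧ 3 * R v - R v ^ 3 = v) (hA : 4 < A) (hc : c ≤ 0)
    {w : ℝ} (hw : w ∈ Icc (-2 : ℝ) 2) : transitTime c (R (3 * w - w ^ 3 - A)) ≤ 3 * (A + 2) ^ 3 :=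
  transitTime_le hc <|
    Ioc_subset_Icc_self (Ioc_subset_Ioc_left one_le_two (kickedRoot_mem_Ioc hR hA hw))

section SlowFlow

variable {c x : ℝ}

theorem slowVelocity_pos (hc : c ≤ -1) (hx : x < c) : 0 < (x - c) / (3 - 3 * x ^ 2) :=
  div_pos_of_neg_of_neg (by linarith) (by nlinarith)

theorem div_nine_le_slowVelocity (hc : c ≤ -1) (hx₁ : -2 ≤ x) (hx₂ : x < c) :
    (c - x) / 9 ≤ (x - c) / (3 - 3 * x ^ 2) := by
  rw [← neg_div_neg_eq (x - c), neg_sub, neg_sub]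
  exact div_le_div_of_nonneg_left (by linarith) (by nlinarith) (by nlinarith)

theorem slowVelocity_le (hc : c < -1) {y : ℝ} (hyx : y ≤ x) (hx : x < c) :
    (x - c) / (3 - 3 * x ^ 2) ≤ (c - y) / (3 * c ^ 2 - 3) := by
  rw [← neg_div_neg_eq (x - c), neg_sub, neg_sub]
  exact div_le_div₀ (by linarith) (by linarith) (by nlinarith) (by nlinarith)

variable {L : ℝ → ℝ}

theorem slowFlow_hasDerivAt
    (hLode : ∀ s : ℝ, 0 ≤ s → HasDerivWithinAt L ((L s - c) / (3 - 3 * L s ^ 2)) (Ici 0) s)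
    {s : ℝ} (hs : s ∈ interior (Ici 0)) : HasDerivAt L ((L s - c) / (3 - 3 * L s ^ 2)) s := by
  rw [interior_Ici] at hs
  exact (hLode s hs.out.le).hasDerivAt (Ici_mem_nhds hs)

theorem slowFlow_strictMonoOn (hc : c ≤ -1) (hLmem : ∀ s : ℝ, 0 ≤ s → L s ∈ Ico (-2 : ℝ) c)
    (hLode : ∀ s : ℝ, 0 ≤ s → HasDerivWithinAt L ((L s - c) / (3 - 3 * L s ^ 2)) (Ici 0) s) :
    StrictMonoOn L (Ici 0) :=
  strictMonoOn_of_deriv_pos (convex_Ici 0) (fun s hs => (hLode s hs).continuousWithinAt)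
    fun s hs => by
      rw [(slowFlow_hasDerivAt hLode hs).deriv]
      exact slowVelocity_pos hc (hLmem s (interior_subset hs)).2

theorem slowFlow_mem_Ioo (hc : c ≤ -1) (hLmem : ∀ s : ℝ, 0 ≤ s → L s ∈ Ico (-2 : ℝ) c)
    (hLode : ∀ s : ℝ, 0 ≤ s → HasDerivWithinAt L ((L s - c) / (3 - 3 * L s ^ 2)) (Ici 0) s)
    {s : ℝ} (hs : 0 < s) : L s ∈ Ioo (-2 : ℝ) c :=
  ⟨(hLmem 0 le_rfl).1.trans_lt
    (slowFlow_strictMonoOn hc hLmem hLode self_mem_Ici (mem_Ici.2 hs.le) hs), (hLmem s hs.le).2⟩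

/-- While `L ≤ c - ε` the speed stays `≥ ε / 9`, so `L` would climb above `c` by time `18 / ε`. -/
theorem slowFlow_exists_gt (hc : c ≤ -1) (hLmem : ∀ s : ℝ, 0 ≤ s → L s ∈ Ico (-2 : ℝ) c)
    (hLode : ∀ s : ℝ, 0 ≤ s → HasDerivWithinAt L ((L s - c) / (3 - 3 * L s ^ 2)) (Ici 0) s)
    {ε : ℝ} (hε : 0 < ε) : ∃ s ≥ 0, c - ε < L s := by
  by_contra! hfar
  have hclimb := (convex_Ici (0 : ℝ)).mul_sub_le_image_sub_of_le_deriv (C := ε / 9)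
    (fun s hs => (hLode s hs).continuousWithinAt)
    (fun s hs => (slowFlow_hasDerivAt hLode hs).differentiableAt.differentiableWithinAt)
    (fun s hs => by
      have hs₀ := interior_subset hs
      rw [(slowFlow_hasDerivAt hLode hs).deriv]
      calc ε / 9 ≤ (c - L s) / 9 := by linarith [hfar s hs₀]
        _ ≤ _ := div_nine_le_slowVelocity hc (hLmem s hs₀).1 (hLmem s hs₀).2)
    0 self_mem_Ici (18 / ε) (mem_Ici.2 (by positivity)) (by positivity)
  have h18 : ε / 9 * (18 / ε - 0) = 2 := by field_simp; norm_num
  linarith [(hLmem 0 le_rfl).1, (hLmem (18 / ε) (by positivity)).2]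

theorem slowFlow_eventually_abs_sub_le (hc : c < -1)
    (hLmem : ∀ s : ℝ, 0 ≤ s → L s ∈ Ico (-2 : ℝ) c)
    (hLode : ∀ s : ℝ, 0 ≤ s → HasDerivWithinAt L ((L s - c) / (3 - 3 * L s ^ 2)) (Ici 0) s)
    {ε : ℝ} (hε : 0 < ε) :
    ∃ s₀ ≥ 0, ∀ s₁ ≥ s₀, ∀ s₂ ≥ s₀, |L s₂ - L s₁| ≤ ε * |s₂ - s₁| := by
  have hd : 0 < 3 * c ^ 2 - 3 := by nlinarith
  obtain ⟨s₀, hs₀, hnear⟩ := slowFlow_exists_gt hc.le hLmem hLode (mul_pos hε hd)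
  refine ⟨s₀, hs₀, fun s₁ hs₁ s₂ hs₂ => ?_⟩
  refine (convex_Ici s₀).norm_image_sub_le_of_norm_hasDerivWithin_le
    (fun s hs => (hLode s (hs₀.trans hs)).mono (Ici_subset_Ici.2 hs₀)) (fun s hs => ?_)
    hs₁ hs₂
  have hLs := hLmem s (hs₀.trans hs)
  rw [Real.norm_eq_abs, abs_of_pos (slowVelocity_pos hc.le hLs.2)]
  calc _ ≤ (c - L s₀) / (3 * c ^ 2 - 3) := slowVelocity_le hc
        ((slowFlow_strictMonoOn hc.le hLmem hLode).monotoneOn hs₀ (hs₀.trans hs) hs) hLs.2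
    _ ≤ ε := by rw [div_le_iff₀ hd]; linarith

end SlowFlow

end FHN

theorem fhn_singular_return_map_contraction_general
    (c A : ℝ) (hc : c ∈ Set.Ioo (-2 : ℝ) (-1)) (hA : 4 < A)
    (R : ℝ → ℝ)
    (hR : ∀ v : ℝ, v < -2 → 2 < R v ∧ 3 * R v - (R v) ^ 3 = v)
    (L : ℝ → ℝ)
    (hLmem : ∀ s : ℝ, 0 ≤ s → L s ∈ Set.Ico (-2 : ℝ) c)
    (hLode : ∀ s : ℝ, 0 ≤ s →
      HasDerivWithinAt L ((L s - c) / (3 - 3 * (L s) ^ 2)) (Set.Ici 0) s) :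
    ∃ α₀ > (0 : ℝ), ∀ α, α₀ < α →
      -- P(w) = L(α − T_R(w)) is well defined on (−2, c): α − T_R(w) lies in [0, ∞)
      (∀ w ∈ Set.Ioo (-2 : ℝ) c,
        0 ≤ α - ∫ u in (1 : ℝ)..(R (3 * w - w ^ 3 - A)), (3 * u ^ 2 - 3) / (u - c)) ∧
      -- fixed point u* of P in (−2, c)
      ∃ ustar ∈ Set.Ioo (-2 : ℝ) c,
        L (α - ∫ u in (1 : ℝ)..(R (3 * ustar - ustar ^ 3 - A)), (3 * u ^ 2 - 3) / (u - c))
          = ustar ∧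
        -- strict (weak) contraction near u*
        ∃ δ > (0 : ℝ),
          ∀ w₁ ∈ Set.Ioo (ustar - δ) (ustar + δ) ∩ Set.Ioo (-2 : ℝ) c,
          ∀ w₂ ∈ Set.Ioo (ustar - δ) (ustar + δ) ∩ Set.Ioo (-2 : ℝ) c,
            w₁ ≠ w₂ →
              |L (α - ∫ u in (1 : ℝ)..(R (3 * w₂ - w₂ ^ 3 - A)), (3 * u ^ 2 - 3) / (u - c)) -
                L (α - ∫ u in (1 : ℝ)..(R (3 * w₁ - w₁ ^ 3 - A)), (3 * u ^ 2 - 3) / (u - c))|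
                < |w₂ - w₁| := by
  obtain ⟨hc₁, hc₂⟩ := hc
  have hc₀ : c ≤ 0 := by linarith
  have hsub : Icc (-2 : ℝ) c ⊆ Icc (-2) (-1) := Icc_subset_Icc_right hc₂.le
  obtain ⟨s₀, hs₀, hLlip⟩ := FHN.slowFlow_eventually_abs_sub_le hc₂ hLmem hLode
    (ε := 1 / (2 * (3 * (A + 2) ^ 2))) (by positivity)
  refine ⟨3 * (A + 2) ^ 3 + s₀ + 1, by positivity, fun α hα => ?_⟩
  let T : ℝ → ℝ := fun w => FHN.transitTime c (R (3 * w - w ^ 3 - A))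
  have hlate : ∀ w ∈ Icc (-2 : ℝ) c, s₀ < α - T w := fun w hw => by
    linarith [FHN.transitTime_kickedRoot_le hR hA hc₀ (w := w) ⟨hw.1, by linarith [hw.2]⟩]
  have hPlip : ∀ w₁ ∈ Icc (-2 : ℝ) c, ∀ w₂ ∈ Icc (-2 : ℝ) c,
      |L (α - T w₂) - L (α - T w₁)| ≤ 1 / 2 * |w₂ - w₁| := fun w₁ hw₁ w₂ hw₂ =>
    calc _ ≤ 1 / (2 * (3 * (A + 2) ^ 2)) * |(α - T w₂) - (α - T w₁)| :=
          hLlip _ (hlate w₁ hw₁).le _ (hlate w₂ hw₂).le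
      _ ≤ 1 / (2 * (3 * (A + 2) ^ 2)) * (3 * (A + 2) ^ 2 * |w₂ - w₁|) := by
          rw [sub_sub_sub_cancel_left, abs_sub_comm]
          gcongr
          exact FHN.abs_transitTime_kickedRoot_sub_le hR hA hc₀ (hsub hw₁) (hsub hw₂)
      _ = 1 / 2 * |w₂ - w₁| := by field_simp
  have hmaps : MapsTo (fun w => L (α - T w)) (Icc (-2 : ℝ) c) (Ioo (-2 : ℝ) c) := fun w hw =>
    FHN.slowFlow_mem_Ioo hc₂.le hLmem hLode (hs₀.trans_lt (hlate w hw))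
  obtain ⟨u, hu, hfix⟩ := exists_mem_Ioo_isFixedPt_of_abs_sub_le hc₁.le hPlip hmaps
  refine ⟨fun w hw => hs₀.trans (hlate w (Ioo_subset_Icc_self hw)).le, u, hu, hfix, 1, one_pos,
    fun w₁ hw₁ w₂ hw₂ hne => ?_⟩
  refine (hPlip w₁ (Ioo_subset_Icc_self hw₁.2) w₂ (Ioo_subset_Icc_self hw₂.2)).trans_lt ?_
  linarith [abs_pos.2 (sub_ne_zero.2 hne.symm)]

/-- For `c ∈ (-2, -1)` and `A > 4`, with `T_R(w)` the right-branch transit time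
and `L` the left-branch slow flow started at `-2`, for all sufficiently large `α` the return
map `P(w) = L(α − T_R(w))` is well defined on `(-2, c)`, has a fixed point `u* ∈ (-2, c)`,
and is a strict (weak) contraction near `u*`; in particular the `α`-periodic trajectory of
the singular (`ε = 0`) periodically kicked FHN cell is locally stable. -/
theorem fhn_singular_return_map_contraction
    (c A : ℝ) (hc : c ∈ Set.Ioo (-2 : ℝ) (-1)) (hA : 4 < A)
    (R : ℝ → ℝ)
    (hR : ∀ v : ℝ, v < -2 → 2 < R v ∧ 3 * R v - (R v) ^ 3 = v)
    (L : ℝ → ℝ)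
    (hLmem : ∀ s : ℝ, 0 ≤ s → L s ∈ Set.Ico (-2 : ℝ) c)
    (hLode : ∀ s : ℝ, 0 ≤ s →
      HasDerivWithinAt L ((L s - c) / (3 - 3 * (L s) ^ 2)) (Set.Ici 0) s)
    (hL0 : L 0 = -2) :
    ∃ α₀ > (0 : ℝ), ∀ α, α₀ < α →
      -- P(w) = L(α − T_R(w)) is well defined on (−2, c): α − T_R(w) lies in [0, ∞)
      (∀ w ∈ Set.Ioo (-2 : ℝ) c,
        0 ≤ α - ∫ u in (1 : ℝ)..(R (3 * w - w ^ 3 - A)), (3 * u ^ 2 - 3) / (u - c)) ∧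
      -- fixed point u* of P in (−2, c)
      ∃ ustar ∈ Set.Ioo (-2 : ℝ) c,
        L (α - ∫ u in (1 : ℝ)..(R (3 * ustar - ustar ^ 3 - A)), (3 * u ^ 2 - 3) / (u - c))
          = ustar ∧
        -- strict (weak) contraction near u*
        ∃ δ > (0 : ℝ),
          ∀ w₁ ∈ Set.Ioo (ustar - δ) (ustar + δ) ∩ Set.Ioo (-2 : ℝ) c,
          ∀ w₂ ∈ Set.Ioo (ustar - δ) (ustar + δ) ∩ Set.Ioo (-2 : ℝ) c,
            w₁ ≠ w₂ →
              |L (α - ∫ u in (1 : ℝ)..(R (3 * w₂ - w₂ ^ 3 - A)), (3 * u ^ 2 - 3) / (u - c)) -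
                L (α - ∫ u in (1 : ℝ)..(R (3 * w₁ - w₁ ^ 3 - A)), (3 * u ^ 2 - 3) / (u - c))|
                < |w₂ - w₁| :=
  fhn_singular_return_map_contraction_general c A hc hA R hR L hLmem hLode
end

section
/- Let ε > 0 and c ∈ ℝ, and let (u₁, v₁) and (u₂, v₂) be differentiable functions ℝ → ℝ² each satisfying ε·uᵢ'(t) = 3uᵢ(t) − uᵢ(t)³ − vᵢ(t) and vᵢ'(t) = uᵢ(t) − c. Define g(t) = ε·(u₂(t) − u₁(t))² + (v₂(t) − v₁(t))² and w(t) = u₂(t) − u₁(t). Then for all t, g'(t) = 2·w(t)²·(3 − 3u₁(t)² − 3u₁(t)·w(t) − w(t)²); consequently g(α) − g(0) = 2∫₀^α w(t)²·(3 − 3u₁(t)² − 3u₁(t)·w(t) − w(t)²) dt for every α > 0. -/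
/-! Writing `w = u₂ - u₁` and `z = v₂ - v₁`, the system gives `ε w' = f(u₂) - f(u₁) - z` and
`z' = w`, so in `g' = 2 ε w w' + 2 z z'` the coupling terms `∓ 2 w z` cancel and
`g' = 2 w (f(u₂) - f(u₁))`. For the cubic `f(u) = 3u - u³` the difference `f(u₂) - f(u₁)`
factors as `w (3 - 3u₁² - 3u₁w - w²)`; the integral identity is the fundamental theorem of
calculus, the integrand being continuous since `u₁` and `u₂` are differentiable. -/

open intervalIntegral

section SeparationFunctional

variable {ε c t : ℝ} {f u₁ v₁ u₂ v₂ : ℝ → ℝ}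

theorem hasDerivAt_separationFunctional (hε : ε ≠ 0)
    (hu₁ : HasDerivAt u₁ ((f (u₁ t) - v₁ t) / ε) t) (hv₁ : HasDerivAt v₁ (u₁ t - c) t)
    (hu₂ : HasDerivAt u₂ ((f (u₂ t) - v₂ t) / ε) t) (hv₂ : HasDerivAt v₂ (u₂ t - c) t) :
    HasDerivAt (fun s => ε * (u₂ s - u₁ s) ^ 2 + (v₂ s - v₁ s) ^ 2)
      (2 * (u₂ t - u₁ t) * (f (u₂ t) - f (u₁ t))) t := by
  have h : HasDerivAt (fun s => ε * (u₂ s - u₁ s) ^ 2 + (v₂ s - v₁ s) ^ 2) _ t :=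
    (((hu₂.sub hu₁).pow 2).const_mul ε).add ((hv₂.sub hv₁).pow 2)
  refine h.congr_deriv ?_
  simp only [Pi.sub_apply]
  field_simp
  ring

end SeparationFunctional

theorem fhn_sub_fhn (a b : ℝ) :
    3 * b - b ^ 3 - (3 * a - a ^ 3) =
      (b - a) * (3 - 3 * a ^ 2 - 3 * a * (b - a) - (b - a) ^ 2) := by
  ring

/-- for two solutions of the FHN system, the separation functional
`g(t) = ε(u₂ − u₁)² + (v₂ − v₁)²` satisfies
`g'(t) = 2 w(t)² (3 − 3u₁(t)² − 3u₁(t)w(t) − w(t)²)` with `w = u₂ − u₁`, and hence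
`g(α) − g(0) = 2∫₀^α w² (3 − 3u₁² − 3u₁w − w²) dt` for every `α > 0`. -/
theorem fhn_separation_functional_derivative (ε c : ℝ) (hε : 0 < ε)
    (u₁ v₁ u₂ v₂ : ℝ → ℝ)
    (h₁ : ∀ t : ℝ, HasDerivAt u₁ ((3 * u₁ t - u₁ t ^ 3 - v₁ t) / ε) t ∧
      HasDerivAt v₁ (u₁ t - c) t)
    (h₂ : ∀ t : ℝ, HasDerivAt u₂ ((3 * u₂ t - u₂ t ^ 3 - v₂ t) / ε) t ∧
      HasDerivAt v₂ (u₂ t - c) t) :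
    (∀ t : ℝ,
      HasDerivAt (fun s => ε * (u₂ s - u₁ s) ^ 2 + (v₂ s - v₁ s) ^ 2)
        (2 * (u₂ t - u₁ t) ^ 2 *
          (3 - 3 * u₁ t ^ 2 - 3 * u₁ t * (u₂ t - u₁ t) - (u₂ t - u₁ t) ^ 2)) t) ∧
    ∀ α : ℝ, 0 < α →
      (ε * (u₂ α - u₁ α) ^ 2 + (v₂ α - v₁ α) ^ 2) -
          (ε * (u₂ 0 - u₁ 0) ^ 2 + (v₂ 0 - v₁ 0) ^ 2) =
        2 * ∫ t in (0 : ℝ)..α,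
          (u₂ t - u₁ t) ^ 2 *
            (3 - 3 * u₁ t ^ 2 - 3 * u₁ t * (u₂ t - u₁ t) - (u₂ t - u₁ t) ^ 2) := by
  have hderiv : ∀ t : ℝ,
      HasDerivAt (fun s => ε * (u₂ s - u₁ s) ^ 2 + (v₂ s - v₁ s) ^ 2)
        (2 * (u₂ t - u₁ t) ^ 2 *
          (3 - 3 * u₁ t ^ 2 - 3 * u₁ t * (u₂ t - u₁ t) - (u₂ t - u₁ t) ^ 2)) t := fun t =>
    (hasDerivAt_separationFunctional (f := fun u => 3 * u - u ^ 3) hε.ne'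
      (h₁ t).1 (h₁ t).2 (h₂ t).1 (h₂ t).2).congr_deriv (by rw [fhn_sub_fhn]; ring)
  refine ⟨hderiv, fun α _ => ?_⟩
  have hu₁ : Continuous u₁ := continuous_iff_continuousAt.2 fun t => (h₁ t).1.continuousAt
  have hu₂ : Continuous u₂ := continuous_iff_continuousAt.2 fun t => (h₂ t).1.continuousAt
  rw [← integral_const_mul]
  simp only [← mul_assoc]
  exact (integral_eq_sub_of_hasDerivAt (fun t _ => hderiv t)
    (Continuous.intervalIntegrable (by fun_prop) 0 α)).symm
end

section
/- Fix c ∈ (−2, −1) and A > 4, and define T : (−2, c) → ℝ by T(w) = ∫₁^{R(f(w) − A)} (3u² − 3)/(u − c) du + ∫_{−2}^{w} (3 − 3u²)/(u − c) du. Then T is continuous and strictly increasing on (−2, c), and T(w) → +∞ as w → c⁻. -/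
/-!
Write `T(w) = F(h(w)) + G(w)` with landing point `h(w) = R(f(w) - A)`, right-branch time
`F(r) = ∫₁^r (3u² - 3)/(u - c)` and left-branch time `G(w) = ∫₋₂^w (3 - 3u²)/(u - c)`.
Since `f` decreases on `(-∞, -1]` and on `[1, ∞)`, its inverse branch `R` decreases on
`(-∞, -2)` and `h` increases; `R` is continuous, being monotone onto the open set `(2, ∞)`.
`F` is nondecreasing on `[1, ∞)` and the integrand of `G` is positive left of `c < -1`, so `T`
increases strictly. For `u < c < 0` we have `u² ≥ c²`, so the integrand of `G` dominates
`(3c² - 3)/(c - u)`, whose integral diverges logarithmically as `w → c⁻`.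
-/

open Filter Topology Set MeasureTheory intervalIntegral

section Primitive

variable {φ : ℝ → ℝ} {s : Set ℝ} {a : ℝ}

theorem continuousOn_primitive_of_isOpen {E : Type*} [NormedAddCommGroup E] [NormedSpace ℝ E]
    [CompleteSpace E] {g : ℝ → E} (hs : IsOpen s) (hsc : s.OrdConnected) (ha : a ∈ s)
    (hg : ContinuousOn g s) : ContinuousOn (fun r => ∫ u in a..r, g u) s := fun r hr =>
  (integral_hasDerivAt_right ((hg.mono (hsc.uIcc_subset ha hr)).intervalIntegrable)
    (hg.stronglyMeasurableAtFilter hs r hr)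
    (hg.continuousAt (hs.mem_nhds hr))).continuousAt.continuousWithinAt

theorem monotoneOn_primitive_of_nonneg (hsc : s.OrdConnected) (ha : a ∈ s)
    (hφ : ContinuousOn φ s) (hnonneg : ∀ x ∈ s, 0 ≤ φ x) :
    MonotoneOn (fun r => ∫ u in a..r, φ u) s := by
  intro r₁ h₁ r₂ h₂ hr
  have hint : ∀ {x y}, x ∈ s → y ∈ s → IntervalIntegrable φ volume x y := fun hx hy =>
    (hφ.mono (hsc.uIcc_subset hx hy)).intervalIntegrable
  rw [← sub_nonneg, integral_interval_sub_left (hint ha h₂) (hint ha h₁)]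
  exact integral_nonneg hr fun x hx => hnonneg x (hsc.out h₁ h₂ hx)

theorem strictMonoOn_primitive_of_pos (hsc : s.OrdConnected) (ha : a ∈ s)
    (hφ : ContinuousOn φ s) (hpos : ∀ x ∈ s, 0 < φ x) :
    StrictMonoOn (fun r => ∫ u in a..r, φ u) s := by
  intro r₁ h₁ r₂ h₂ hr
  have hint : ∀ {x y}, x ∈ s → y ∈ s → IntervalIntegrable φ volume x y := fun hx hy =>
    (hφ.mono (hsc.uIcc_subset hx hy)).intervalIntegrable
  rw [← sub_pos, integral_interval_sub_left (hint ha h₂) (hint ha h₁)]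
  exact intervalIntegral_pos_of_pos_on (hint h₁ h₂)
    (fun x hx => hpos x (hsc.out h₁ h₂ (Ioo_subset_Icc_self hx))) hr

end Primitive

theorem integral_inv_sub_left {a b c : ℝ} (ha : a < c) (hb : b < c) :
    ∫ u in a..b, (c - u)⁻¹ = Real.log (c - a) - Real.log (c - b) := by
  have h0 : (0 : ℝ) ∉ uIcc (c - b) (c - a) := by
    rw [mem_uIcc]; rintro (⟨h, -⟩ | ⟨h, -⟩) <;> linarith
  rw [integral_comp_sub_left (fun x => x⁻¹), integral_inv h0,
    Real.log_div (by linarith) (by linarith)]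

theorem tendsto_integral_inv_sub_left {a c : ℝ} (ha : a < c) :
    Tendsto (fun w => ∫ u in a..w, (c - u)⁻¹) (𝓝[<] c) atTop := by
  have hsub : Tendsto (fun w => c - w) (𝓝[<] c) (𝓝[>] 0) := by
    have h := ((continuous_sub_left c).tendsto' c 0 (sub_self c)).mono_left
      (nhdsWithin_le_nhds (s := Iio c))
    exact tendsto_nhdsWithin_of_tendsto_nhds_of_eventually_within _ h
      (eventually_nhdsWithin_of_forall fun _ hw => sub_pos.2 (mem_Iio.1 hw))
  have hlog := tendsto_neg_atBot_atTop.comp (Real.tendsto_log_nhdsGT_zero.comp hsub)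
  refine (tendsto_atTop_add_const_left _ (Real.log (c - a)) hlog).congr' ?_
  filter_upwards [Ioo_mem_nhdsLT ha] with w hw
  rw [integral_inv_sub_left ha hw.2]
  rfl

theorem tendsto_primitive_atTop_of_inv_sub_le {φ : ℝ → ℝ} {a c k : ℝ} (ha : a < c) (hk : 0 < k)
    (hφ : ContinuousOn φ (Iio c)) (hle : ∀ u ∈ Ico a c, k * (c - u)⁻¹ ≤ φ u) :
    Tendsto (fun w => ∫ u in a..w, φ u) (𝓝[<] c) atTop := by
  have hsub : ∀ {w}, w < c → uIcc a w ⊆ Iio c := fun hw =>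
    ordConnected_Iio.uIcc_subset (mem_Iio.2 ha) (mem_Iio.2 hw)
  have hinv : ContinuousOn (fun u => k * (c - u)⁻¹) (Iio c) :=
    continuousOn_const.mul <| (continuousOn_const.sub continuousOn_id).inv₀ fun _ hu =>
      (sub_pos.2 hu).ne'
  refine tendsto_atTop_mono' _ ?_ ((tendsto_integral_inv_sub_left ha).const_mul_atTop hk)
  filter_upwards [Ioo_mem_nhdsLT ha] with w hw
  rw [← intervalIntegral.integral_const_mul]
  exact integral_mono_on hw.1.le ((hinv.mono (hsub hw.2)).intervalIntegrable)
    ((hφ.mono (hsub hw.2)).intervalIntegrable) fun u hu => hle u ⟨hu.1, hu.2.trans_lt hw.2⟩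

def fhn (u : ℝ) : ℝ := 3 * u - u ^ 3

theorem hasDerivAt_fhn (x : ℝ) : HasDerivAt fhn (3 - 3 * x ^ 2) x :=
  (((hasDerivAt_id x).const_mul 3).sub (hasDerivAt_pow 3 x)).congr_deriv (by norm_num)

theorem continuous_fhn : Continuous fhn :=
  continuous_iff_continuousAt.2 fun x => (hasDerivAt_fhn x).continuousAt

theorem strictAntiOn_fhn_Ici : StrictAntiOn fhn (Ici 1) := by
  refine strictAntiOn_of_deriv_neg (convex_Ici 1) continuous_fhn.continuousOn fun x hx => ?_
  rw [interior_Ici] at hx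
  rw [(hasDerivAt_fhn x).deriv]
  nlinarith [mem_Ioi.1 hx]

theorem strictAntiOn_fhn_Iic : StrictAntiOn fhn (Iic (-1)) := by
  refine strictAntiOn_of_deriv_neg (convex_Iic (-1)) continuous_fhn.continuousOn fun x hx => ?_
  rw [interior_Iic] at hx
  rw [(hasDerivAt_fhn x).deriv]
  nlinarith [mem_Iio.1 hx]

theorem fhn_lt_neg_two {y : ℝ} (hy : 2 < y) : fhn y < -2 := by
  unfold fhn
  nlinarith [mul_pos (sub_pos.2 hy) (pow_pos (by linarith : (0 : ℝ) < y + 1) 2)]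

theorem fhn_sub_lt_neg_two {A w : ℝ} (hA : 4 < A) (hw : -2 ≤ w) : fhn w - A < -2 := by
  unfold fhn
  nlinarith [mul_nonneg (by linarith : (0 : ℝ) ≤ w + 2) (sq_nonneg (w - 1))]

section RightBranch

variable {R : ℝ → ℝ} (hR : ∀ v : ℝ, v < -2 → 2 < R v ∧ fhn (R v) = v)
include hR

theorem strictAntiOn_rightBranch : StrictAntiOn R (Iio (-2)) := by
  intro v₁ h₁ v₂ h₂ hv
  obtain ⟨hR₁, hv₁⟩ := hR v₁ h₁
  obtain ⟨hR₂, hv₂⟩ := hR v₂ h₂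
  refine lt_of_not_ge fun hle => hv.not_ge ?_
  have := strictAntiOn_fhn_Ici.antitoneOn (mem_Ici.2 (by linarith)) (mem_Ici.2 (by linarith)) hle
  rwa [hv₁, hv₂] at this

theorem rightBranch_fhn {y : ℝ} (hy : 2 < y) : R (fhn y) = y := by
  obtain ⟨hRy, hv⟩ := hR _ (fhn_lt_neg_two hy)
  exact strictAntiOn_fhn_Ici.injOn (mem_Ici.2 (by linarith)) (mem_Ici.2 (by linarith)) hv

theorem continuousOn_rightBranch : ContinuousOn R (Iio (-2)) := by
  have himage : (fun v => -R v) '' Iio (-2) = Iio (-2) := by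
    refine Subset.antisymm ?_ fun t ht => ?_
    · rintro _ ⟨v, hv, rfl⟩
      exact neg_lt_neg (hR v hv).1
    · have ht2 : 2 < -t := by linarith [mem_Iio.1 ht]
      exact ⟨_, fhn_lt_neg_two ht2, by simp only [rightBranch_fhn hR ht2, neg_neg]⟩
  intro v hv
  have hneg : ContinuousAt (fun v => -R v) v :=
    (strictAntiOn_rightBranch hR).neg.continuousAt_of_image_mem_nhds (isOpen_Iio.mem_nhds hv)
      (by rw [himage]; exact isOpen_Iio.mem_nhds (neg_lt_neg (hR v hv).1))
  simpa only [Pi.neg_def, neg_neg] using hneg.neg.continuousWithinAt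

variable {A : ℝ} (hA : 4 < A)
include hA

theorem mapsTo_landing : MapsTo (fun w => R (fhn w - A)) (Ici (-2)) (Ioi 2) :=
  fun _ hw => (hR _ (fhn_sub_lt_neg_two hA hw)).1

theorem continuousOn_landing : ContinuousOn (fun w => R (fhn w - A)) (Ici (-2)) :=
  (continuousOn_rightBranch hR).comp (continuous_fhn.sub continuous_const).continuousOn
    fun _ hw => fhn_sub_lt_neg_two hA hw

theorem strictMonoOn_landing : StrictMonoOn (fun w => R (fhn w - A)) (Icc (-2) (-1)) := by
  intro w₁ h₁ w₂ h₂ hw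
  refine strictAntiOn_rightBranch hR (fhn_sub_lt_neg_two hA h₂.1) (fhn_sub_lt_neg_two hA h₁.1) ?_
  linarith [strictAntiOn_fhn_Iic h₁.2 h₂.2 hw]

end RightBranch

section TransitTimes

variable {c : ℝ}

theorem continuousOn_rightTransit (hc : c < 1) :
    ContinuousOn (fun r => ∫ u in (1 : ℝ)..r, (3 * u ^ 2 - 3) / (u - c)) (Ioi c) :=
  continuousOn_primitive_of_isOpen isOpen_Ioi ordConnected_Ioi hc
    (ContinuousOn.div (by fun_prop) (by fun_prop) fun _ hu => sub_ne_zero.2 (ne_of_gt hu))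

theorem monotoneOn_rightTransit (hc : c < 1) :
    MonotoneOn (fun r => ∫ u in (1 : ℝ)..r, (3 * u ^ 2 - 3) / (u - c)) (Ici 1) :=
  monotoneOn_primitive_of_nonneg ordConnected_Ici self_mem_Ici
    (ContinuousOn.div (by fun_prop) (by fun_prop) fun u hu =>
      sub_ne_zero.2 (ne_of_gt (hc.trans_le hu)))
    fun u hu => div_nonneg (by nlinarith [mem_Ici.1 hu]) (by linarith [mem_Ici.1 hu])

theorem continuousOn_leftTransit (hc : -2 < c) :
    ContinuousOn (fun w => ∫ u in (-2 : ℝ)..w, (3 - 3 * u ^ 2) / (u - c)) (Iio c) :=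
  continuousOn_primitive_of_isOpen isOpen_Iio ordConnected_Iio hc
    (ContinuousOn.div (by fun_prop) (by fun_prop) fun _ hu => sub_ne_zero.2 (ne_of_lt hu))

theorem strictMonoOn_leftTransit (hc : c ∈ Ioc (-2) (-1)) :
    StrictMonoOn (fun w => ∫ u in (-2 : ℝ)..w, (3 - 3 * u ^ 2) / (u - c)) (Iio c) :=
  strictMonoOn_primitive_of_pos ordConnected_Iio hc.1
    (ContinuousOn.div (by fun_prop) (by fun_prop) fun _ hu => sub_ne_zero.2 (ne_of_lt hu))
    fun u hu => div_pos_of_neg_of_neg (by nlinarith [mem_Iio.1 hu, hc.2]) (sub_neg.2 hu)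

theorem tendsto_leftTransit (hc : c ∈ Ioo (-2) (-1)) :
    Tendsto (fun w => ∫ u in (-2 : ℝ)..w, (3 - 3 * u ^ 2) / (u - c)) (𝓝[<] c) atTop := by
  obtain ⟨hc2, hc1⟩ := hc
  refine tendsto_primitive_atTop_of_inv_sub_le hc2 (by nlinarith : 0 < 3 * c ^ 2 - 3)
    (ContinuousOn.div (by fun_prop) (by fun_prop) fun _ hu => sub_ne_zero.2 (ne_of_lt hu))
    fun u hu => ?_
  have hcu : 0 < c - u := sub_pos.2 hu.2
  rw [← neg_div_neg_eq, neg_sub, neg_sub, div_eq_mul_inv]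
  exact mul_le_mul_of_nonneg_right (by nlinarith [hu.2]) (inv_nonneg.2 hcu.le)

end TransitTimes

/-- for `c ∈ (-2, -1)` and `A > 4`, the total slow transit time
`T(w) = ∫₁^{R(f(w) − A)} (3u² − 3)/(u − c) du + ∫₋₂^w (3 − 3u²)/(u − c) du`
is continuous and strictly increasing on `(-2, c)`, and `T(w) → +∞` as `w → c⁻`. -/
theorem fhn_total_transit_time_monotone
    (c A : ℝ) (hc : c ∈ Set.Ioo (-2 : ℝ) (-1)) (hA : 4 < A)
    (R : ℝ → ℝ)
    (hR : ∀ v : ℝ, v < -2 → 2 < R v ∧ 3 * R v - (R v) ^ 3 = v) :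
    ContinuousOn
        (fun w =>
          (∫ u in (1 : ℝ)..(R (3 * w - w ^ 3 - A)), (3 * u ^ 2 - 3) / (u - c)) +
            ∫ u in (-2 : ℝ)..w, (3 - 3 * u ^ 2) / (u - c))
        (Set.Ioo (-2 : ℝ) c) ∧
      StrictMonoOn
        (fun w =>
          (∫ u in (1 : ℝ)..(R (3 * w - w ^ 3 - A)), (3 * u ^ 2 - 3) / (u - c)) +
            ∫ u in (-2 : ℝ)..w, (3 - 3 * u ^ 2) / (u - c))
        (Set.Ioo (-2 : ℝ) c) ∧
      Tendsto
        (fun w =>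
          (∫ u in (1 : ℝ)..(R (3 * w - w ^ 3 - A)), (3 * u ^ 2 - 3) / (u - c)) +
            ∫ u in (-2 : ℝ)..w, (3 - 3 * u ^ 2) / (u - c))
        (𝓝[<] c) atTop := by
  obtain ⟨hc2, hc1⟩ := hc
  have hmaps : MapsTo (fun w => R (3 * w - w ^ 3 - A)) (Ioo (-2) c) (Ioi 2) :=
    (mapsTo_landing hR hA).mono_left fun w hw => mem_Ici.2 hw.1.le
  refine ⟨?_, ?_, ?_⟩
  · refine ContinuousOn.add ?_ ((continuousOn_leftTransit hc2).mono fun w hw => hw.2)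
    exact (continuousOn_rightTransit (by linarith)).comp
      ((continuousOn_landing hR hA).mono fun w hw => mem_Ici.2 hw.1.le)
      fun w hw => (mem_Ioi.1 (hmaps hw)).trans' (by linarith)
  · refine MonotoneOn.add_strictMono ?_ ((strictMonoOn_leftTransit ⟨hc2, hc1.le⟩).mono
      fun w hw => hw.2)
    exact (monotoneOn_rightTransit (by linarith)).comp
      ((strictMonoOn_landing hR hA).monotoneOn.mono fun w hw => ⟨hw.1.le, by linarith [hw.2]⟩)
      fun w hw => mem_Ici.2 (by linarith [mem_Ioi.1 (hmaps hw)])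
  · refine tendsto_atTop_mono' _ ?_ (tendsto_leftTransit ⟨hc2, hc1⟩)
    filter_upwards [Ioo_mem_nhdsLT hc2] with w hw
    -- `F(h(w)) ≥ F(1) = 0`
    have hland : 1 ≤ R (3 * w - w ^ 3 - A) := by linarith [mem_Ioi.1 (hmaps hw)]
    have hright := monotoneOn_rightTransit (by linarith : c < 1) self_mem_Ici hland hland
    simp only [integral_same] at hright
    exact le_add_of_nonneg_left hright
end
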